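/- Let ρ_AB be a bipartite state with ρ_A = Σᵢ pᵢ|i⟩⟨i| a spectral decomposition, and let ũ^γ(ρ) = (1−γ)UρU† + γ tr(ρ) I/d_A be a unitary-isotropic channel on A with γ∈[0,1] and U unitary. Then (ũ^γ⊗I_B) applied to Σᵢ(|i⟩⟨i|⊗I)ρ_AB(|i⟩⟨i|⊗I) equals Σᵢ(U|i⟩⟨i|U†⊗I)[(ũ^γ⊗I_B)(ρ_AB)](U|i⟩⟨i|U†⊗I); moreover {U|i⟩⟨i|U†} is an eigenbasis of the reduced state of (ũ^γ⊗I_B)(ρ_AB), with eigenvalues (1−γ)pᵢ+γ/d_A. Hence unitary-isotropic channels commute with the discord destroying map π_A. -/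

import Mathlib

open Matrix
open scoped ComplexOrder Kronecker

/-- A density operator (on a Hilbert space indexed by `ι`). -/
def IsDensity {ι : Type*} [Fintype ι] [DecidableEq ι] (ρ : Matrix ι ι ℂ) : Prop :=
  ρ.PosSemidef ∧ ρ.trace = 1

/-- Partial trace over the second factor B. -/
noncomputable def trB {dA dB : ℕ} (ρ : Matrix (Fin dA × Fin dB) (Fin dA × Fin dB) ℂ) :
    Matrix (Fin dA) (Fin dA) ℂ :=
  Matrix.of fun i j => ∑ b, ρ (i, b) (j, b)

/-- Partial trace over the first factor A. -/
noncomputable def trA {dA dB : ℕ} (ρ : Matrix (Fin dA × Fin dB) (Fin dA × Fin dB) ℂ) :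
    Matrix (Fin dB) (Fin dB) ℂ :=
  Matrix.of fun b b' => ∑ a, ρ (a, b) (a, b')

/-- The local measurement map π_A(ρ) = Σᵢ (|i⟩⟨i|⊗I) ρ (|i⟩⟨i|⊗I) in the computational
basis {|i⟩} of A (an eigenbasis of ρ_A). -/
noncomputable def piA {dA dB : ℕ} (ρ : Matrix (Fin dA × Fin dB) (Fin dA × Fin dB) ℂ) :
    Matrix (Fin dA × Fin dB) (Fin dA × Fin dB) ℂ :=
  Matrix.of fun x y => if x.1 = y.1 then ρ x y else 0

/-! Conjugation by `U ⊗ I` carries the local projections `|i⟩⟨i| ⊗ I` to the rotated ones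
`U|i⟩⟨i|U† ⊗ I`, so the unitary part of the channel intertwines the two dephasings. The
depolarising part `I ⊗ tr_A ρ` is fixed by any dephasing of `A` along idempotents summing to `I`,
and `tr_A` does not see `π_A`. For the reduced state, `tr_B` is covariant under `U ⊗ I` and sends
`I ⊗ tr_A ρ` to `(tr ρ) I`. -/

section Kronecker
variable {ι l m n p α : Type*}

theorem sum_kronecker [NonUnitalNonAssocSemiring α] (s : Finset ι) (A : ι → Matrix l m α)
    (B : Matrix n p α) : (∑ i ∈ s, A i) ⊗ₖ B = ∑ i ∈ s, A i ⊗ₖ B := by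
  ext; simp [kroneckerMap_apply, Matrix.sum_apply, Finset.sum_mul]

variable [Fintype m] [Fintype n] [DecidableEq n]

theorem kronecker_one_mul_mul_kronecker_one_mul_mul [CommSemiring α] (A B C D : Matrix m m α)
    (M : Matrix (m × n) (m × n) α) :
    (A ⊗ₖ (1 : Matrix n n α)) * ((B ⊗ₖ 1) * M * (C ⊗ₖ 1)) * (D ⊗ₖ 1) =
      ((A * B) ⊗ₖ 1) * M * ((C * D) ⊗ₖ 1) := by
  conv_rhs => rw [← Matrix.mul_one (1 : Matrix n n α), mul_kronecker_mul, mul_kronecker_mul]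
  simp only [Matrix.mul_assoc]

theorem sum_kronecker_one_mul_one_kronecker_mul_of_idempotent [Fintype ι] [DecidableEq m]
    [CommSemiring α] (Q : ι → Matrix m m α) (hQ : ∀ i, Q i * Q i = Q i) (hsum : ∑ i, Q i = 1)
    (T : Matrix n n α) :
    ∑ i, (Q i ⊗ₖ 1) * (1 ⊗ₖ T) * (Q i ⊗ₖ 1) = 1 ⊗ₖ T := by
  simp only [← mul_kronecker_mul, Matrix.mul_one, Matrix.one_mul, hQ, ← sum_kronecker, hsum]

end Kronecker

section PartialTrace
variable {dA dB : ℕ}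

theorem single_kronecker_one_eq_diagonal (i : Fin dA) :
    single i i (1 : ℂ) ⊗ₖ (1 : Matrix (Fin dB) (Fin dB) ℂ) =
      diagonal fun x => if x.1 = i then 1 else 0 := by
  rw [← diagonal_single, ← diagonal_one, diagonal_kronecker_diagonal]
  congr 1
  ext x
  simp [Pi.single_apply]

theorem piA_eq_sum_conj_single_kronecker_one (ρ : Matrix (Fin dA × Fin dB) (Fin dA × Fin dB) ℂ) :
    piA ρ = ∑ i, (single i i (1 : ℂ) ⊗ₖ (1 : Matrix (Fin dB) (Fin dB) ℂ)) * ρ *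
      (single i i (1 : ℂ) ⊗ₖ (1 : Matrix (Fin dB) (Fin dB) ℂ)) := by
  ext x y
  simp [single_kronecker_one_eq_diagonal, diagonal_mul, mul_diagonal, Matrix.sum_apply, piA]

theorem trA_piA (ρ : Matrix (Fin dA × Fin dB) (Fin dA × Fin dB) ℂ) : trA (piA ρ) = trA ρ := by
  ext b b'
  simp [trA, piA]

theorem trace_trA (ρ : Matrix (Fin dA × Fin dB) (Fin dA × Fin dB) ℂ) :
    (trA ρ).trace = ρ.trace := by
  simp only [trace, trA, diag, of_apply, Fintype.sum_prod_type]
  exact Finset.sum_comm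

theorem trB_add (M N : Matrix (Fin dA × Fin dB) (Fin dA × Fin dB) ℂ) :
    trB (M + N) = trB M + trB N := by
  ext i j; simp [trB, Finset.sum_add_distrib]

theorem trB_smul (c : ℂ) (M : Matrix (Fin dA × Fin dB) (Fin dA × Fin dB) ℂ) :
    trB (c • M) = c • trB M := by
  ext i j; simp [trB, Finset.mul_sum]

theorem trB_kronecker (A : Matrix (Fin dA) (Fin dA) ℂ) (B : Matrix (Fin dB) (Fin dB) ℂ) :
    trB (A ⊗ₖ B) = B.trace • A := by
  ext i j; simp [trB, trace, ← Finset.mul_sum, mul_comm]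

theorem trB_kronecker_one_mul_mul (A B : Matrix (Fin dA) (Fin dA) ℂ)
    (M : Matrix (Fin dA × Fin dB) (Fin dA × Fin dB) ℂ) :
    trB ((A ⊗ₖ (1 : Matrix (Fin dB) (Fin dB) ℂ)) * M * (B ⊗ₖ 1)) = A * trB M * B := by
  ext i j
  simp only [trB, of_apply, mul_apply, Fintype.sum_prod_type, kroneckerMap_apply,
    Matrix.one_apply, mul_ite, ite_mul, mul_zero, zero_mul, mul_one,
    Finset.sum_ite_eq, Finset.sum_ite_eq', Finset.mem_univ, if_true,
    Finset.sum_mul, Finset.mul_sum]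
  rw [Finset.sum_comm]
  exact Finset.sum_congr rfl fun k _ => Finset.sum_comm

end PartialTrace

-- `ũ^γ ⊗ I_B`: the depolarising term `tr(·) I/d_A ⊗ I_B` acts on `ρ_AB` as `I/d_A ⊗ tr_A ρ_AB`.
noncomputable def unitaryIsotropic {dA dB : ℕ} (γ : ℝ) (U : Matrix (Fin dA) (Fin dA) ℂ)
    (M : Matrix (Fin dA × Fin dB) (Fin dA × Fin dB) ℂ) :
    Matrix (Fin dA × Fin dB) (Fin dA × Fin dB) ℂ :=
  ((1 - γ : ℝ) : ℂ) • ((U ⊗ₖ (1 : Matrix (Fin dB) (Fin dB) ℂ)) * M *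
      (U ⊗ₖ (1 : Matrix (Fin dB) (Fin dB) ℂ))ᴴ) +
    ((γ / dA : ℝ) : ℂ) • ((1 : Matrix (Fin dA) (Fin dA) ℂ) ⊗ₖ trA M)

section UnitaryIsotropic
variable {dA dB : ℕ} {U : Matrix (Fin dA) (Fin dA) ℂ}

theorem unitaryIsotropic_piA_eq_sum_rotated_conj (hU : U * Uᴴ = 1 ∧ Uᴴ * U = 1) (γ : ℝ)
    (M : Matrix (Fin dA × Fin dB) (Fin dA × Fin dB) ℂ) :
    unitaryIsotropic γ U (piA M) =
      ∑ i, ((U * single i i (1 : ℂ) * Uᴴ) ⊗ₖ (1 : Matrix (Fin dB) (Fin dB) ℂ)) *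
        unitaryIsotropic γ U M * ((U * single i i (1 : ℂ) * Uᴴ) ⊗ₖ 1) := by
  obtain ⟨hUUh, hUhU⟩ := hU
  set Q : Fin dA → Matrix (Fin dA) (Fin dA) ℂ := fun i => U * single i i 1 * Uᴴ
  have hQU : ∀ i, Q i * U = U * single i i 1 := fun i => by
    simp only [Q, Matrix.mul_assoc, hUhU, Matrix.mul_one]
  have hUhQ : ∀ i, Uᴴ * Q i = single i i 1 * Uᴴ := fun i => by
    simp only [Q, ← Matrix.mul_assoc, hUhU, Matrix.one_mul]
  have hQQ : ∀ i, Q i * Q i = Q i := fun i => by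
    simp only [Q, Matrix.mul_assoc, ← Matrix.mul_assoc Uᴴ U, hUhU, Matrix.one_mul,
      ← Matrix.mul_assoc (single i i (1 : ℂ)), single_mul_single_same, mul_one]
  have hQsum : ∑ i, Q i = 1 := by
    simp only [Q, ← Finset.sum_mul, ← Finset.mul_sum, sum_single_one, Matrix.mul_one, hUUh]
  simp only [unitaryIsotropic, conjTranspose_kronecker, conjTranspose_one, Matrix.mul_add,
    Matrix.add_mul, mul_smul_comm, smul_mul_assoc, Finset.sum_add_distrib, ← Finset.smul_sum,
    trA_piA]
  congr 2
  · rw [piA_eq_sum_conj_single_kronecker_one, Finset.mul_sum, Finset.sum_mul]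
    refine Finset.sum_congr rfl fun i _ => ?_
    rw [kronecker_one_mul_mul_kronecker_one_mul_mul, kronecker_one_mul_mul_kronecker_one_mul_mul,
      hQU, hUhQ]
  · exact (sum_kronecker_one_mul_one_kronecker_mul_of_idempotent Q hQQ hQsum (trA M)).symm

theorem trB_unitaryIsotropic (hU : U * Uᴴ = 1) (γ : ℝ)
    (M : Matrix (Fin dA × Fin dB) (Fin dA × Fin dB) ℂ) :
    trB (unitaryIsotropic γ U M) =
      U * (((1 - γ : ℝ) : ℂ) • trB M + (((γ / dA : ℝ) : ℂ) * M.trace) • 1) * Uᴴ := by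
  simp only [unitaryIsotropic, trB_add, trB_smul, conjTranspose_kronecker, conjTranspose_one,
    trB_kronecker_one_mul_mul, trB_kronecker, trace_trA, Matrix.mul_add, Matrix.add_mul,
    mul_smul_comm, smul_mul_assoc, Matrix.mul_one, hU, smul_smul]

end UnitaryIsotropic

theorem unitary_isotropic_commutes_with_piA_general {dA dB : ℕ}
    (ρAB : Matrix (Fin dA × Fin dB) (Fin dA × Fin dB) ℂ)
    (hρ : IsDensity ρAB)
    (p : Fin dA → ℝ)
    (hspec : trB ρAB = Matrix.diagonal fun i => (p i : ℂ))
    (γ : ℝ)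
    (U : Matrix (Fin dA) (Fin dA) ℂ) (hU : U * Uᴴ = 1 ∧ Uᴴ * U = 1)
    -- the unitary-isotropic channel acting locally on A:
    (Ephi : Matrix (Fin dA × Fin dB) (Fin dA × Fin dB) ℂ →
        Matrix (Fin dA × Fin dB) (Fin dA × Fin dB) ℂ)
    (hEphi : ∀ M, Ephi M =
      ((1 - γ : ℝ) : ℂ) • ((U ⊗ₖ (1 : Matrix (Fin dB) (Fin dB) ℂ)) * M *
          (U ⊗ₖ (1 : Matrix (Fin dB) (Fin dB) ℂ))ᴴ) +
        ((γ / dA : ℝ) : ℂ) • ((1 : Matrix (Fin dA) (Fin dA) ℂ) ⊗ₖ trA M)) :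
    Ephi (piA ρAB) =
      (∑ i, ((U * single i i (1 : ℂ) * Uᴴ) ⊗ₖ (1 : Matrix (Fin dB) (Fin dB) ℂ)) *
        Ephi ρAB *
        ((U * single i i (1 : ℂ) * Uᴴ) ⊗ₖ (1 : Matrix (Fin dB) (Fin dB) ℂ))) ∧
    trB (Ephi ρAB) =
      U * Matrix.diagonal (fun i => (((1 - γ) * p i + γ / dA : ℝ) : ℂ)) * Uᴴ := by
  obtain rfl : Ephi = unitaryIsotropic γ U := funext hEphi
  refine ⟨unitaryIsotropic_piA_eq_sum_rotated_conj hU γ ρAB, ?_⟩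
  rw [trB_unitaryIsotropic hU.1, hspec, hρ.2, mul_one]
  congr 2
  ext i j
  by_cases h : i = j <;> simp [h]

/-- Unitary-isotropic channels commute with the discord destroying map π_A:
(ũ^γ⊗I)(π_A(ρ_AB)) equals the projection of (ũ^γ⊗I)(ρ_AB) onto the rotated basis
{U|i⟩⟨i|U†⊗I}, and {U|i⟩⟨i|U†} is an eigenbasis of the new reduced state with
eigenvalues (1−γ)pᵢ + γ/d_A. -/
theorem unitary_isotropic_commutes_with_piA {dA dB : ℕ} [NeZero dA] [NeZero dB]
    (ρAB : Matrix (Fin dA × Fin dB) (Fin dA × Fin dB) ℂ)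
    (hρ : IsDensity ρAB)
    (p : Fin dA → ℝ)
    (hspec : trB ρAB = Matrix.diagonal fun i => (p i : ℂ))
    (γ : ℝ) (hγ0 : 0 ≤ γ) (hγ1 : γ ≤ 1)
    (U : Matrix (Fin dA) (Fin dA) ℂ) (hU : U * Uᴴ = 1 ∧ Uᴴ * U = 1)
    -- the unitary-isotropic channel acting locally on A:
    (Ephi : Matrix (Fin dA × Fin dB) (Fin dA × Fin dB) ℂ →
        Matrix (Fin dA × Fin dB) (Fin dA × Fin dB) ℂ)
    (hEphi : ∀ M, Ephi M =
      ((1 - γ : ℝ) : ℂ) • ((U ⊗ₖ (1 : Matrix (Fin dB) (Fin dB) ℂ)) * M *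
          (U ⊗ₖ (1 : Matrix (Fin dB) (Fin dB) ℂ))ᴴ) +
        ((γ / dA : ℝ) : ℂ) • ((1 : Matrix (Fin dA) (Fin dA) ℂ) ⊗ₖ trA M)) :
    Ephi (piA ρAB) =
      (∑ i, ((U * single i i (1 : ℂ) * Uᴴ) ⊗ₖ (1 : Matrix (Fin dB) (Fin dB) ℂ)) *
        Ephi ρAB *
        ((U * single i i (1 : ℂ) * Uᴴ) ⊗ₖ (1 : Matrix (Fin dB) (Fin dB) ℂ))) ∧
    trB (Ephi ρAB) =
      U * Matrix.diagonal (fun i => (((1 - γ) * p i + γ / dA : ℝ) : ℂ)) * Uᴴ :=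
  unitary_isotropic_commutes_with_piA_general ρAB hρ p hspec γ U hU Ephi hEphi
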